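/- Quantitative Laplace principle: Let f ∈ P(ℝ^d) with u* ∈ supp(f) and let L satisfy λ_min|u−u*|² ≤ L(u) − L(u*) ≤ η|u−u*| + λ_max|u−u*|² on the support of f, with λ_min, λ_max > 0, η ≥ 0. Fix α > 0 and ε > 0, and set R = min{ ε² λ_min / (8(λ_max + η)), 1 }. Then |m^α_L[f] − u*| ≤ ε/2 + (e^{−α λ_min (ε/4)²} / f(B_R(u*))) · ∫ |u − u*| f(du). -/

import Mathlib

open MeasureTheory

/-- The support of a measure: points all of whose neighborhoods have positive mass. -/
def measSupport {d : ℕ} (f : Measure (EuclideanSpace ℝ (Fin d))) :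
    Set (EuclideanSpace ℝ (Fin d)) :=
  {x | ∀ r > 0, 0 < f (Metric.ball x r)}

/-! With `w = exp (-α L)` and `Z = ∫ w`, the Gibbs mean satisfies
`m - u* = Z⁻¹ ∫ w(u) (u - u*)`. Within distance `ε/2` of `u*` the integrand contributes at most
`(ε/2) Z`; beyond it the lower growth bound gives `w ≤ exp (-α (L u* + λ_min ε²/4))`. The upper
growth bound and the choice of `R` give `w ≥ exp (-α (L u* + λ_min ε²/8))` on `B_R(u*)`, hence a
lower bound for `Z`, and the ratio of the two exponentials is
`exp (-α λ_min ε²/8) ≤ exp (-α λ_min (ε/4)²)`. The growth bounds hold only on the support, which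
has full measure. -/

open Metric

lemma measSupport_eq_support {d : ℕ} (f : Measure (EuclideanSpace ℝ (Fin d))) :
    measSupport f = f.support := by
  ext x
  exact nhds_basis_ball.mem_measureSupport.symm

lemma ae_mem_measSupport {d : ℕ} (f : Measure (EuclideanSpace ℝ (Fin d))) :
    ∀ᵐ u ∂f, u ∈ measSupport f := by
  rw [measSupport_eq_support]
  exact Measure.support_mem_ae

section WeightedMean

variable {E : Type*} [NormedAddCommGroup E] [MeasurableSpace E] {μ : Measure E} {w : E → ℝ}

lemma integral_mul_norm_sub_le (x : E) {r K : ℝ} (hr : 0 ≤ r) (hK : 0 ≤ K) (hw : 0 ≤ w)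
    (hw_int : Integrable w μ) (hdist_int : Integrable (fun u => ‖u - x‖) μ)
    (hfar : ∀ᵐ u ∂μ, r < ‖u - x‖ → w u ≤ K) :
    ∫ u, w u * ‖u - x‖ ∂μ ≤ r * ∫ u, w u ∂μ + K * ∫ u, ‖u - x‖ ∂μ := by
  rw [← integral_const_mul, ← integral_const_mul,
    ← integral_add (hw_int.const_mul r) (hdist_int.const_mul K)]
  refine integral_mono_of_nonneg (.of_forall fun u => mul_nonneg (hw u) (norm_nonneg _))
    ((hw_int.const_mul r).add (hdist_int.const_mul K)) ?_
  filter_upwards [hfar] with u hu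
  rcases le_or_gt ‖u - x‖ r with hnear | hfar
  · nlinarith [mul_le_mul_of_nonneg_left hnear (hw u), mul_nonneg hK (norm_nonneg (u - x))]
  · nlinarith [mul_le_mul_of_nonneg_right (hu hfar) (norm_nonneg (u - x)), mul_nonneg hr (hw u)]

variable [NormedSpace ℝ E] [CompleteSpace E]

lemma norm_inv_integral_smul_integral_smul_sub_le (x : E) (hw : 0 ≤ w)
    (hw_int : Integrable w μ) (hwu_int : Integrable (fun u => w u • u) μ)
    (hZ : 0 < ∫ u, w u ∂μ) :
    ‖(∫ u, w u ∂μ)⁻¹ • (∫ u, w u • u ∂μ) - x‖ ≤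
      (∫ u, w u ∂μ)⁻¹ * ∫ u, w u * ‖u - x‖ ∂μ := by
  have hcentered : (∫ u, w u ∂μ)⁻¹ • (∫ u, w u • u ∂μ) - x =
      (∫ u, w u ∂μ)⁻¹ • ∫ u, w u • (u - x) ∂μ := by
    simp only [smul_sub]
    rw [integral_sub hwu_int (hw_int.smul_const x), integral_smul_const, smul_sub, smul_smul,
      inv_mul_cancel₀ hZ.ne', one_smul]
  rw [hcentered, norm_smul, Real.norm_of_nonneg (inv_nonneg.2 hZ.le)]
  gcongr
  refine (norm_integral_le_integral_norm _).trans_eq (integral_congr_ae ?_)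
  filter_upwards with u
  rw [norm_smul, Real.norm_of_nonneg (hw u)]

theorem norm_weighted_mean_sub_le [IsFiniteMeasure μ] (x : E) {S : Set E} {r c K : ℝ}
    (hr : 0 ≤ r) (hc : 0 < c) (hK : 0 ≤ K) (hS : MeasurableSet S) (hμS : 0 < μ S) (hw : 0 ≤ w)
    (hw_int : Integrable w μ) (hwu_int : Integrable (fun u => w u • u) μ)
    (hdist_int : Integrable (fun u => ‖u - x‖) μ)
    (hnear : ∀ᵐ u ∂μ, u ∈ S → c ≤ w u) (hfar : ∀ᵐ u ∂μ, r < ‖u - x‖ → w u ≤ K) :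
    ‖(∫ u, w u ∂μ)⁻¹ • (∫ u, w u • u ∂μ) - x‖ ≤ r + K / c / μ.real S * ∫ u, ‖u - x‖ ∂μ := by
  have hmass : 0 < c * μ.real S := mul_pos hc (ENNReal.toReal_pos hμS.ne' (measure_ne_top μ S))
  have hZ_ge : c * μ.real S ≤ ∫ u, w u ∂μ :=
    calc c * μ.real S = ∫ _ in S, c ∂μ := by rw [setIntegral_const, smul_eq_mul, mul_comm]
      _ ≤ ∫ u in S, w u ∂μ := setIntegral_mono_on_ae (integrableOn_const (measure_ne_top μ S))
          hw_int.integrableOn hS hnear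
      _ ≤ ∫ u, w u ∂μ := setIntegral_le_integral hw_int (.of_forall hw)
  have hZ : 0 < ∫ u, w u ∂μ := hmass.trans_le hZ_ge
  calc ‖(∫ u, w u ∂μ)⁻¹ • (∫ u, w u • u ∂μ) - x‖
      ≤ (∫ u, w u ∂μ)⁻¹ * (r * ∫ u, w u ∂μ + K * ∫ u, ‖u - x‖ ∂μ) :=
        (norm_inv_integral_smul_integral_smul_sub_le x hw hw_int hwu_int hZ).trans <|
          by gcongr; exact integral_mul_norm_sub_le x hr hK hw hw_int hdist_int hfar
    _ = r + K / (∫ u, w u ∂μ) * ∫ u, ‖u - x‖ ∂μ := by field_simp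
    _ ≤ r + K / (c * μ.real S) * ∫ u, ‖u - x‖ ∂μ := by gcongr
    _ = r + K / c / μ.real S * ∫ u, ‖u - x‖ ∂μ := by rw [div_div]

end WeightedMean

lemma mul_add_mul_sq_le_of_le_min {η lmax lmin ε t : ℝ} (hη : 0 ≤ η) (hlmax : 0 < lmax)
    (ht : 0 ≤ t) (htR : t ≤ min (ε ^ 2 * lmin / (8 * (lmax + η))) 1) :
    η * t + lmax * t ^ 2 ≤ lmin * ε ^ 2 / 8 := by
  have hsq : t ^ 2 ≤ t := by nlinarith [htR.trans (min_le_right _ _)]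
  have hlin : (lmax + η) * t ≤ lmin * ε ^ 2 / 8 := by
    have := htR.trans (min_le_left _ _)
    rw [le_div_iff₀ (by positivity)] at this
    linarith
  nlinarith [mul_le_mul_of_nonneg_left hsq hlmax.le]

theorem quantitative_laplace_principle_general
    {d : ℕ} (f : Measure (EuclideanSpace ℝ (Fin d))) [IsProbabilityMeasure f]
    (L : EuclideanSpace ℝ (Fin d) → ℝ)
    (ustar : EuclideanSpace ℝ (Fin d)) (hsupp : ustar ∈ measSupport f)
    (lmin lmax η : ℝ) (hlmin : 0 < lmin) (hlmax : 0 < lmax) (hη : 0 ≤ η)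
    (hgrow : ∀ u ∈ measSupport f,
      lmin * ‖u - ustar‖ ^ 2 ≤ L u - L ustar ∧
        L u - L ustar ≤ η * ‖u - ustar‖ + lmax * ‖u - ustar‖ ^ 2)
    (α ε : ℝ) (hα : 0 < α) (hε : 0 < ε)
    (R : ℝ) (hR : R = min (ε ^ 2 * lmin / (8 * (lmax + η))) 1)
    (hint₁ : Integrable (fun u => Real.exp (-α * L u)) f)
    (hint₂ : Integrable (fun u => Real.exp (-α * L u) • u) f)
    (hint₃ : Integrable (fun u => ‖u - ustar‖) f) :
    ‖((∫ u, Real.exp (-α * L u) ∂f)⁻¹ • ∫ u, Real.exp (-α * L u) • u ∂f) - ustar‖ ≤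
      ε / 2 +
        Real.exp (-α * lmin * (ε / 4) ^ 2) / (f (Metric.closedBall ustar R)).toReal *
          ∫ u, ‖u - ustar‖ ∂f := by
  have hR_pos : 0 < R := hR ▸ lt_min (by positivity) one_pos
  have hball : 0 < f (closedBall ustar R) :=
    (hsupp R hR_pos).trans_le (measure_mono ball_subset_closedBall)
  have hnear : ∀ᵐ u ∂f, u ∈ closedBall ustar R →
      Real.exp (-α * (L ustar + lmin * ε ^ 2 / 8)) ≤ Real.exp (-α * L u) := by
    filter_upwards [ae_mem_measSupport f] with u hu hu_ball
    have hdist : ‖u - ustar‖ ≤ R := by rwa [← dist_eq_norm, ← mem_closedBall]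
    have := mul_add_mul_sq_le_of_le_min hη hlmax (norm_nonneg _) (hR ▸ hdist)
    exact Real.exp_le_exp.2 (mul_le_mul_of_nonpos_left (by linarith [(hgrow u hu).2]) (by linarith))
  have hfar : ∀ᵐ u ∂f, ε / 2 < ‖u - ustar‖ →
      Real.exp (-α * L u) ≤ Real.exp (-α * (L ustar + lmin * (ε / 2) ^ 2)) := by
    filter_upwards [ae_mem_measSupport f] with u hu hu_far
    have : lmin * (ε / 2) ^ 2 ≤ lmin * ‖u - ustar‖ ^ 2 := by gcongr
    exact Real.exp_le_exp.2 (mul_le_mul_of_nonpos_left (by linarith [(hgrow u hu).1]) (by linarith))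
  refine (norm_weighted_mean_sub_le ustar (half_pos hε).le (Real.exp_pos _) (Real.exp_pos _).le
    measurableSet_closedBall hball (fun u => (Real.exp_pos _).le) hint₁ hint₂ hint₃ hnear
    hfar).trans ?_
  rw [← Real.exp_sub]
  gcongr _ + ?_ / _ * _
  · exact ENNReal.toReal_pos hball.ne' (measure_ne_top _ _)
  · exact Real.exp_le_exp.2 (by nlinarith [mul_pos (mul_pos hα hlmin) (pow_pos hε 2)])

/-- quantitative Laplace principle for the Gibbs-weighted mean. -/
theorem quantitative_laplace_principle
    {d : ℕ} (f : Measure (EuclideanSpace ℝ (Fin d))) [IsProbabilityMeasure f]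
    (L : EuclideanSpace ℝ (Fin d) → ℝ) (hLmeas : Measurable L)
    (ustar : EuclideanSpace ℝ (Fin d)) (hsupp : ustar ∈ measSupport f)
    (lmin lmax η : ℝ) (hlmin : 0 < lmin) (hlmax : 0 < lmax) (hη : 0 ≤ η)
    (hgrow : ∀ u ∈ measSupport f,
      lmin * ‖u - ustar‖ ^ 2 ≤ L u - L ustar ∧
        L u - L ustar ≤ η * ‖u - ustar‖ + lmax * ‖u - ustar‖ ^ 2)
    (α ε : ℝ) (hα : 0 < α) (hε : 0 < ε)
    (R : ℝ) (hR : R = min (ε ^ 2 * lmin / (8 * (lmax + η))) 1)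
    (hint₁ : Integrable (fun u => Real.exp (-α * L u)) f)
    (hint₂ : Integrable (fun u => Real.exp (-α * L u) • u) f)
    (hint₃ : Integrable (fun u => ‖u - ustar‖) f) :
    ‖((∫ u, Real.exp (-α * L u) ∂f)⁻¹ • ∫ u, Real.exp (-α * L u) • u ∂f) - ustar‖ ≤
      ε / 2 +
        Real.exp (-α * lmin * (ε / 4) ^ 2) / (f (Metric.closedBall ustar R)).toReal *
          ∫ u, ‖u - ustar‖ ∂f :=
  quantitative_laplace_principle_general f L ustar hsupp lmin lmax η hlmin hlmax hη hgrow α ε hα hε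
    R hR hint₁ hint₂ hint₃
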